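/- arXiv:2001.10206 — 9 statements merged into one kernel-verified Lean document; each statement's English description precedes it below -/
import Mathlib

section
/- Fix a ∈ ℝ, x₀ > 0, and μ > max(2·a·x₀, 1). Suppose M : [0, ∞) → ℝ is differentiable, λ := (1 − exp(−μ·x₀))/μ > 0, and ė : [0, ∞) → ℝ is nonnegative, and suppose that for all t ≥ 0 one has M'(t) ≥ μ·(x₀·ė(t) + μ/2 − a·x₀)·M(t) − λ·μ·ė(t), with M(0) ≥ λ/x₀. Then M(t) ≥ λ/x₀ for all t ≥ 0, and moreover M(t) ≥ exp(μ·(μ/2 − a·x₀)·t)·M(0) for all t ≥ 0; in particular M(t) → ∞ as t → ∞. -/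
open Filter Real

theorem stmt_4 (a x₀ μ lam : ℝ) (hx₀ : 0 < x₀) (hμ : μ > max (2 * a * x₀) 1)
    (M edot : ℝ → ℝ) (hM : Differentiable ℝ M)
    (hlam : lam = (1 - Real.exp (-μ * x₀)) / μ) (hlampos : 0 < lam)
    (hedot : ∀ t, 0 ≤ t → 0 ≤ edot t)
    (hineq : ∀ t, 0 ≤ t →
      deriv M t ≥ μ * (x₀ * edot t + μ / 2 - a * x₀) * M t - lam * μ * edot t)
    (hM0 : M 0 ≥ lam / x₀) :
    (∀ t, 0 ≤ t → M t ≥ lam / x₀) ∧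
    (∀ t, 0 ≤ t → M t ≥ Real.exp (μ * (μ / 2 - a * x₀) * t) * M 0) ∧
    Filter.Tendsto M Filter.atTop Filter.atTop := by
  have hμ1 : (1:ℝ) < μ := lt_of_le_of_lt (le_max_right _ _) hμ
  have hμ0 : (0:ℝ) < μ := lt_trans one_pos hμ1
  have h2ax : 2 * a * x₀ < μ := lt_of_le_of_lt (le_max_left _ _) hμ
  set c := μ * (μ / 2 - a * x₀) with hcdef
  have hc : 0 < c := by rw [hcdef]; nlinarith
  have hlamx : 0 < lam / x₀ := div_pos hlampos hx₀
  -- Part 1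
  have part1 : ∀ t, 0 ≤ t → lam / x₀ ≤ M t := by
    by_contra h
    push_neg at h
    obtain ⟨t₁, ht₁0, ht₁⟩ := h
    set S : Set ℝ := {t | t ∈ Set.Icc 0 t₁ ∧ lam / x₀ ≤ M t} with hSdef
    have h0S : (0:ℝ) ∈ S := ⟨⟨le_refl 0, ht₁0⟩, hM0⟩
    have hSne : S.Nonempty := ⟨0, h0S⟩
    have hSbdd : BddAbove S := ⟨t₁, fun x hx => hx.1.2⟩
    have hSclosed : IsClosed S := by
      have : S = Set.Icc 0 t₁ ∩ M ⁻¹' Set.Ici (lam / x₀) := by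
        ext x; simp [hSdef, Set.mem_Icc]
      rw [this]
      exact isClosed_Icc.inter (isClosed_Ici.preimage hM.continuous)
    set s := sSup S with hs
    have hsS : s ∈ S := hSclosed.csSup_mem hSne hSbdd
    have hs0 : 0 ≤ s := hsS.1.1
    have hMs : lam / x₀ ≤ M s := hsS.2
    have hst₁ : s < t₁ := lt_of_le_of_ne hsS.1.2 (by intro heq; rw [heq] at hMs; linarith)
    -- derivative at s is positive
    have hx : lam ≤ x₀ * M s := by rw [div_le_iff₀ hx₀] at hMs; linarith
    have hd : 0 < deriv M s := by
      have h1 := hineq s hs0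
      have he := hedot s hs0
      nlinarith [mul_nonneg (mul_nonneg hμ0.le he) (sub_nonneg.mpr hx),
        mul_lt_mul_of_pos_left hlamx hc]
    have hslope := hasDerivAt_iff_tendsto_slope.mp (hM s).hasDerivAt
    have hev : ∀ᶠ x in nhdsWithin s {s}ᶜ, 0 < slope M s x :=
      hslope.eventually (eventually_gt_nhds hd)
    have hev' : ∀ᶠ x in nhdsWithin s (Set.Ioi s), 0 < slope M s x :=
      hev.filter_mono (nhdsWithin_mono s (fun x hx => ne_of_gt hx))
    have hmem : Set.Ioo s t₁ ∈ nhdsWithin s (Set.Ioi s) :=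
      Ioo_mem_nhdsGT_of_mem ⟨le_refl s, hst₁⟩
    have hmem' : ∀ᶠ x in nhdsWithin s (Set.Ioi s), x ∈ Set.Ioo s t₁ :=
      eventually_of_mem hmem (fun y hy => hy)
    obtain ⟨x, hx1, hx2⟩ := (hev'.and hmem').exists
    · have hxs : s < x := hx2.1
      have hslope_pos : 0 < (M x - M s) / (x - s) := by
        simpa [slope_def_field, div_eq_mul_inv] using hx1
      have hMx : M s < M x := by
        have hxs' : 0 < x - s := sub_pos.mpr hxs
        nlinarith [mul_pos hslope_pos hxs', div_mul_cancel₀ (M x - M s) (ne_of_gt hxs')]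
      have hxS : x ∈ S := ⟨⟨le_of_lt (lt_of_le_of_lt hs0 hxs), le_of_lt hx2.2⟩,
        le_of_lt (lt_of_le_of_lt hMs hMx)⟩
      exact absurd (le_csSup hSbdd hxS) (not_le.mpr hxs)
  -- key differential inequality
  have key : ∀ t, 0 ≤ t → c * M t ≤ deriv M t := by
    intro t ht
    have h1 := hineq t ht
    have he := hedot t ht
    have hMt := part1 t ht
    have hx : lam ≤ x₀ * M t := by rw [div_le_iff₀ hx₀] at hMt; linarith
    nlinarith [mul_nonneg (mul_nonneg hμ0.le he) (sub_nonneg.mpr hx)]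
  -- Part 2
  have part2 : ∀ t, 0 ≤ t → Real.exp (c * t) * M 0 ≤ M t := by
    set g : ℝ → ℝ := fun t => Real.exp (-c * t) * M t with hgdef
    have hgderiv : ∀ t, HasDerivAt g
        (Real.exp (-c * t) * (-c) * M t + Real.exp (-c * t) * deriv M t) t := by
      intro t
      have h1 : HasDerivAt (fun x : ℝ => -c * x) (-c) t := by
        simpa using (hasDerivAt_id t).const_mul (-c)
      exact (h1.exp).mul (hM t).hasDerivAt
    have hgdiff : Differentiable ℝ g := fun t => (hgderiv t).differentiableAt
    have hmono : MonotoneOn g (Set.Ici 0) := by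
      apply monotoneOn_of_deriv_nonneg (convex_Ici 0) hgdiff.continuous.continuousOn
        hgdiff.differentiableOn
      intro t ht
      rw [interior_Ici] at ht
      rw [(hgderiv t).deriv]
      have := key t (le_of_lt ht)
      nlinarith [Real.exp_pos (-c * t)]
    intro t ht
    have := hmono (Set.self_mem_Ici) ht ht
    have hg0 : g 0 = M 0 := by simp [hgdef]
    rw [hg0] at this
    have h2 := mul_le_mul_of_nonneg_left this (Real.exp_pos (c * t)).le
    calc Real.exp (c * t) * M 0 ≤ Real.exp (c * t) * g t := h2
      _ = M t := by
        simp only [hgdef]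
        rw [← mul_assoc, ← Real.exp_add]
        ring_nf
        simp
  -- Part 3
  have hM0pos : 0 < M 0 := lt_of_lt_of_le hlamx hM0
  have htend : Tendsto (fun t => Real.exp (c * t) * M 0) atTop atTop :=
    (Real.tendsto_exp_atTop.comp (tendsto_id.const_mul_atTop hc)).atTop_mul_const hM0pos
  refine ⟨fun t ht => part1 t ht, fun t ht => part2 t ht, ?_⟩
  apply tendsto_atTop_mono' _ _ htend
  filter_upwards [eventually_ge_atTop (0:ℝ)] with t ht
  exact part2 t ht
end

section
/- Fix a ∈ ℝ and x₀ > 0, and let μ > max(2·a·x₀, 1). There is no pair (M, ė) with M : [0, ∞) → [0, 1] differentiable, ė : [0, ∞) → [0, ∞), M(0) ≥ (1 − e^{−μx₀})/(μ·x₀), and M'(t) ≥ μ·(x₀·ė(t) + μ/2 − a·x₀)·M(t) − (1 − e^{−μx₀})·ė(t) for all t ≥ 0. -/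
open Filter Set Topology

lemma aux_pos (f : ℝ → ℝ) (hf : Differentiable ℝ f) {δ : ℝ} (hδ : 0 < δ)
    (h0 : 0 ≤ f 0) (hd : ∀ t, 0 ≤ t → 0 ≤ f t → δ ≤ deriv f t) :
    ∀ t, 0 ≤ t → 0 ≤ f t := by
  by_contra h
  push_neg at h
  obtain ⟨t₀, ht₀, hft₀⟩ := h
  set B : Set ℝ := {t | 0 ≤ t ∧ f t < 0} with hB
  have hBne : B.Nonempty := ⟨t₀, ht₀, hft₀⟩
  have hBbd : BddBelow B := ⟨0, fun x hx => hx.1⟩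
  set T := sInf B with hT
  have hT0 : 0 ≤ T := le_csInf hBne (fun x hx => hx.1)
  have hpos : ∀ s, 0 ≤ s → s < T → 0 ≤ f s := by
    intro s hs hsT
    by_contra hneg
    push_neg at hneg
    exact absurd (csInf_le hBbd ⟨hs, hneg⟩) (not_le.2 hsT)
  have hfT_le : f T ≤ 0 := by
    have hC : IsClosed {t : ℝ | f t ≤ 0} := isClosed_le hf.continuous continuous_const
    have hsub : closure B ⊆ {t : ℝ | f t ≤ 0} :=
      hC.closure_subset_iff.2 (fun x hx => hx.2.le)
    exact hsub (csInf_mem_closure hBne hBbd)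
  have hfT_ge : 0 ≤ f T := by
    rcases eq_or_lt_of_le hT0 with h | h
    · rw [← h]; exact h0
    · have htend : Tendsto f (𝓝[<] T) (𝓝 (f T)) :=
        (hf.continuous.tendsto T).mono_left nhdsWithin_le_nhds
      have hev : ∀ᶠ x in 𝓝[<] T, 0 ≤ f x := by
        filter_upwards [Ioo_mem_nhdsLT_of_mem (show T ∈ Set.Ioc (0:ℝ) T from ⟨h, le_refl T⟩)]
          with x hx
        exact hpos x hx.1.le hx.2
      exact ge_of_tendsto htend hev
  have hfT : f T = 0 := le_antisymm hfT_le hfT_ge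
  have hder : δ ≤ deriv f T := hd T hT0 hfT_ge
  have hslope : Tendsto (slope f T) (𝓝[>] T) (𝓝 (deriv f T)) := by
    have h1 : Tendsto (slope f T) (𝓝[≠] T) (𝓝 (deriv f T)) :=
      (hasDerivAt_iff_tendsto_slope).1 (hf T).hasDerivAt
    exact h1.mono_left (nhdsWithin_mono T (fun x hx => ne_of_gt hx))
  have hev : ∀ᶠ t in 𝓝[>] T, 0 < slope f T t :=
    hslope.eventually (eventually_gt_nhds (lt_of_lt_of_le hδ hder))
  obtain ⟨u, hu, hub⟩ := mem_nhdsGT_iff_exists_Ioo_subset.1 hev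
  obtain ⟨b, hbB, hbu⟩ := exists_lt_of_csInf_lt hBne (show sInf B < u from hu)
  have hbT : T ≤ b := csInf_le hBbd hbB
  have hbT' : T < b := lt_of_le_of_ne hbT (by
    intro h
    rw [← h] at hbB
    exact absurd hfT (ne_of_lt hbB.2))
  have hsb : 0 < slope f T b := hub ⟨hbT', hbu⟩
  rw [slope_def_field] at hsb
  have hfb : f b < 0 := hbB.2
  have hnum : f b - f T < 0 := by rw [hfT]; linarith
  have := div_neg_of_neg_of_pos hnum (by linarith : (0:ℝ) < b - T)
  linarith

theorem stmt_5 (a x₀ μ : ℝ) (hx₀ : 0 < x₀) (hμ : μ > max (2 * a * x₀) 1) :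
    ¬ ∃ (M edot : ℝ → ℝ), Differentiable ℝ M ∧
      (∀ t, 0 ≤ t → 0 ≤ M t ∧ M t ≤ 1) ∧
      (∀ t, 0 ≤ t → 0 ≤ edot t) ∧
      M 0 ≥ (1 - Real.exp (-μ * x₀)) / (μ * x₀) ∧
      (∀ t, 0 ≤ t →
        deriv M t ≥ μ * (x₀ * edot t + μ / 2 - a * x₀) * M t
          - (1 - Real.exp (-μ * x₀)) * edot t) := by
  rintro ⟨M, edot, hdiff, hbound, hedot, hM0, hode⟩
  set E := Real.exp (-μ * x₀) with hE
  have hμ1 : 1 < μ := lt_of_le_of_lt (le_max_right _ _) hμ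
  have hμ2 : 2 * a * x₀ < μ := lt_of_le_of_lt (le_max_left _ _) hμ
  have hμ0 : 0 < μ := lt_trans one_pos hμ1
  have hμx : 0 < μ * x₀ := mul_pos hμ0 hx₀
  have hE1 : E < 1 := by
    rw [hE]
    rw [Real.exp_lt_one_iff]
    nlinarith
  have hE0 : 0 < E := Real.exp_pos _
  set K := (1 - E) / (μ * x₀) with hK
  have hK0 : 0 < K := div_pos (by linarith) hμx
  have hK1 : K ≤ 1 := by
    rw [hK, div_le_one hμx]
    have := Real.add_one_le_exp (-μ * x₀)
    linarith
  have hKe : μ * x₀ * K = 1 - E := by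
    rw [hK]; field_simp
  have hc0 : 0 < μ / 2 - a * x₀ := by linarith
  have hδ : 0 < μ * (μ / 2 - a * x₀) * K := by positivity
  have hderK : ∀ t, 0 ≤ t → 0 ≤ M t - K → μ * (μ / 2 - a * x₀) * K ≤ deriv M t := by
    intro t ht hMt
    have h1 := hode t ht
    have h2 := hedot t ht
    have e1 : 0 ≤ μ * x₀ * edot t * (M t - K) :=
      mul_nonneg (mul_nonneg (mul_nonneg hμ0.le hx₀.le) h2) hMt
    have e2 : 0 ≤ μ * (μ / 2 - a * x₀) * (M t - K) :=
      mul_nonneg (mul_nonneg hμ0.le hc0.le) hMt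
    have e3 : (1 - E) * edot t = μ * x₀ * K * edot t := by rw [hKe]
    nlinarith [h1, e1, e2, e3]
  have key : ∀ t, 0 ≤ t → 0 ≤ M t - K := by
    apply aux_pos (fun t => M t - K) (hdiff.sub_const K) hδ
    · show (0:ℝ) ≤ M 0 - K
      linarith [hM0]
    intro t ht hMt
    rw [deriv_sub_const]
    exact hderK t ht hMt
  set δ := μ * (μ / 2 - a * x₀) * K with hδdef
  have hD : ∀ t, 0 ≤ t → δ ≤ deriv M t := fun t ht => hderK t ht (key t ht)
  -- linear growth
  have hdg : ∀ t : ℝ, HasDerivAt (fun s => M s - δ * s) (deriv M t - δ) t := by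
    intro t
    exact ((hdiff t).hasDerivAt.sub ((hasDerivAt_id t).const_mul δ)).congr_deriv (by ring)
  have mono : MonotoneOn (fun s => M s - δ * s) (Set.Ici (0:ℝ)) := by
    apply monotoneOn_of_deriv_nonneg (convex_Ici 0)
    · exact (hdiff.sub ((differentiable_id.const_mul δ))).continuous.continuousOn
    · intro x hx
      exact ((hdiff x).sub ((differentiable_id.const_mul δ) x)).differentiableWithinAt
    · intro x hx
      rw [interior_Ici] at hx
      rw [(hdg x).deriv]
      have := hD x (le_of_lt hx)
      linarith
  set T := (1 - K) / δ + 1 with hTdef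
  have hT0 : 0 ≤ T := by
    have : 0 ≤ (1 - K) / δ := div_nonneg (by linarith) hδ.le
    rw [hTdef]; linarith
  have hmono := mono (Set.self_mem_Ici) (Set.mem_Ici.2 hT0) hT0
  have hδT : δ * T = (1 - K) + δ := by
    rw [hTdef]; field_simp
  have hMT := (hbound T hT0).2
  have hM0' : K ≤ M 0 := hM0
  simp only at hmono
  linarith
end

section
/- Let x₀ > 0 and e₀ := 1/x₀². Define p : [0, ∞) → ℝ by p(x) = 2·e₀·(∫₀^{min(x, x₀)} e^{2·x₀·e₀·y} dy)·e^{−2·x₀·e₀·x}. Then p is a probability density on [0, ∞), i.e., p ≥ 0 and ∫₀^∞ p(x) dx = 1. -/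
open MeasureTheory Real Set Filter

lemma aux_integral_exp_neg_mul_Ioi {b : ℝ} (hb : 0 < b) (a : ℝ) :
    ∫ x in Set.Ioi a, Real.exp (-(b * x)) = Real.exp (-(b * a)) / b := by
  have hderiv : ∀ x ∈ Set.Ici a,
      HasDerivAt (fun x => -Real.exp (-(b * x)) / b) (Real.exp (-(b * x))) x := by
    intro x _
    have h1 : HasDerivAt (fun x : ℝ => -(b * x)) (-b) x := by
      exact ((hasDerivAt_id x).const_mul b).neg.congr_deriv (by simp)
    have h2 := (h1.exp).neg.div_const b
    exact h2.congr_deriv (by field_simp)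
  have hint : IntegrableOn (fun x => Real.exp (-(b * x))) (Set.Ioi a) := by
    simpa [neg_mul] using exp_neg_integrableOn_Ioi a hb
  have htend : Tendsto (fun x => -Real.exp (-(b * x)) / b) atTop (nhds 0) := by
    have h0 : Tendsto (fun x : ℝ => b * x) atTop atTop :=
      Tendsto.const_mul_atTop hb tendsto_id
    have h1 : Tendsto (fun x : ℝ => Real.exp (-(b * x))) atTop (nhds 0) :=
      Real.tendsto_exp_neg_atTop_nhds_zero.comp h0
    simpa using (h1.neg.div_const b)
  have := MeasureTheory.integral_Ioi_of_hasDerivAt_of_tendsto' hderiv hint htend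
  rw [this]; ring

lemma aux_interval_exp_mul {c : ℝ} (hc : c ≠ 0) (a b : ℝ) :
    ∫ x in a..b, Real.exp (c * x) = (Real.exp (c * b) - Real.exp (c * a)) / c := by
  rw [intervalIntegral.integral_comp_mul_left (fun y => Real.exp y) hc,
    integral_exp, smul_eq_mul]
  ring

theorem stmt_7 (x₀ e₀ : ℝ) (hx₀ : 0 < x₀) (he₀ : e₀ = 1 / x₀ ^ 2)
    (p : ℝ → ℝ)
    (hp : ∀ x, p x = 2 * e₀ * (∫ y in (0:ℝ)..(min x x₀), Real.exp (2 * x₀ * e₀ * y))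
      * Real.exp (-(2 * x₀ * e₀ * x))) :
    (∀ x, 0 ≤ x → 0 ≤ p x) ∧ (∫ x in Set.Ioi (0 : ℝ), p x) = 1 := by
  have hx0ne : x₀ ≠ 0 := ne_of_gt hx₀
  set c := 2 * x₀ * e₀ with hcdef
  have hc : c = 2 / x₀ := by rw [hcdef, he₀]; field_simp
  have hcpos : 0 < c := by rw [hc]; positivity
  have hcne : c ≠ 0 := ne_of_gt hcpos
  have hcx : c * x₀ = 2 := by rw [hc]; field_simp
  have he₀pos : 0 < e₀ := by rw [he₀]; positivity
  -- closed form for p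
  have hform : ∀ x, p x = x₀⁻¹ * ((Real.exp (c * min x x₀) - 1) * Real.exp (-(c * x))) := by
    intro x
    rw [hp x, aux_interval_exp_mul hcne]
    have h1 : 2 * e₀ * ((Real.exp (c * min x x₀) - Real.exp (c * 0)) / c)
        * Real.exp (-(c * x))
        = (2 * e₀ / c) * ((Real.exp (c * min x x₀) - Real.exp (c * 0))
          * Real.exp (-(c * x))) := by ring
    rw [h1]
    have h2 : 2 * e₀ / c = x₀⁻¹ := by
      rw [hcdef]
      field_simp
    rw [h2, mul_zero, Real.exp_zero]
  -- nonnegativity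
  constructor
  · intro x hx
    rw [hform x]
    have hmin : 0 ≤ min x x₀ := le_min hx hx₀.le
    have h1 : (1:ℝ) ≤ Real.exp (c * min x x₀) := Real.one_le_exp (by positivity)
    have h2 : 0 < x₀⁻¹ := by positivity
    have h3 := Real.exp_pos (-(c * x))
    exact mul_nonneg h2.le (mul_nonneg (by linarith) h3.le)
  -- the integral
  · have hsplit : Set.Ioi (0:ℝ) = Set.Ioc 0 x₀ ∪ Set.Ioi x₀ :=
      (Set.Ioc_union_Ioi_eq_Ioi hx₀.le).symm
    have hpfun : p = fun x => x₀⁻¹ * ((Real.exp (c * min x x₀) - 1) * Real.exp (-(c * x))) :=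
      funext hform
    have hcont : Continuous p := by
      rw [hpfun]; continuity
    have hint2 : IntegrableOn p (Set.Ioi x₀) := by
      have h' : IntegrableOn (fun x => Real.exp (-(c * x))) (Set.Ioi x₀) := by
        simpa [neg_mul] using exp_neg_integrableOn_Ioi x₀ hcpos
      have hbase := h'.const_mul (x₀⁻¹ * (Real.exp (c * x₀) - 1))
      apply IntegrableOn.congr_fun hbase ?_ measurableSet_Ioi
      intro x hx
      rw [hform x, min_eq_right (le_of_lt hx)]
      ring
    have hint1 : IntegrableOn p (Set.Ioc 0 x₀) := hcont.integrableOn_Ioc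
    rw [hsplit, setIntegral_union (Set.Ioc_disjoint_Ioi le_rfl) measurableSet_Ioi hint1 hint2]
    -- first piece
    have hI1 : ∫ x in Set.Ioc 0 x₀, p x = 1 - (1 - Real.exp (-2)) / 2 := by
      rw [← intervalIntegral.integral_of_le hx₀.le]
      have hcongr : ∫ x in (0:ℝ)..x₀, p x
          = ∫ x in (0:ℝ)..x₀, (x₀⁻¹ - x₀⁻¹ * Real.exp ((-c) * x)) := by
        apply intervalIntegral.integral_congr
        intro x hx
        rw [Set.uIcc_of_le hx₀.le] at hx
        rw [hform x, min_eq_left hx.2]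
        have : (Real.exp (c * x) - 1) * Real.exp (-(c * x)) = 1 - Real.exp ((-c) * x) := by
          rw [sub_mul, ← Real.exp_add, add_neg_cancel, Real.exp_zero, neg_mul]
          ring
        rw [this]
        ring
      have hi : IntervalIntegrable (fun x => x₀⁻¹ * Real.exp ((-c) * x)) volume 0 x₀ := by
        apply Continuous.intervalIntegrable
        fun_prop
      rw [hcongr, intervalIntegral.integral_sub intervalIntegrable_const hi,
        intervalIntegral.integral_const, intervalIntegral.integral_const_mul,
        aux_interval_exp_mul (neg_ne_zero.mpr hcne)]
      have h2 : (-c) * x₀ = -2 := by rw [neg_mul, hcx]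
      rw [h2, mul_zero, Real.exp_zero]
      rw [show (x₀ - 0) • x₀⁻¹ = (1:ℝ) by rw [smul_eq_mul, sub_zero]; field_simp]
      have hcx' : x₀⁻¹ = c / 2 := by rw [hc]; field_simp
      rw [hcx']
      field_simp
      ring
    -- second piece
    have hI2 : ∫ x in Set.Ioi x₀, p x = (Real.exp 2 - 1) * Real.exp (-2) / 2 := by
      have hcongr : ∫ x in Set.Ioi x₀, p x
          = ∫ x in Set.Ioi x₀, (x₀⁻¹ * (Real.exp (c * x₀) - 1)) * Real.exp (-(c * x)) := by
        apply setIntegral_congr_fun measurableSet_Ioi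
        intro x hx
        rw [hform x, min_eq_right (le_of_lt hx)]
        ring
      rw [hcongr, MeasureTheory.integral_const_mul, aux_integral_exp_neg_mul_Ioi hcpos, hcx]
      have hcx' : x₀⁻¹ = c / 2 := by rw [hc]; field_simp
      rw [hcx']
      field_simp
    rw [hI1, hI2]
    have hEe : Real.exp (-2:ℝ) * Real.exp 2 = 1 := by
      rw [← Real.exp_add]; norm_num
    nlinarith [hEe]
end

section
/- Let x₀ > 0 and e₀ := 1/x₀², and define p(x) = 2·e₀·(∫₀^{min(x, x₀)} e^{2·x₀·e₀·y} dy)·e^{−2·x₀·e₀·x} for x ≥ 0. Then the first moment of p equals x₀: ∫₀^∞ x·p(x) dx = x₀. -/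
open MeasureTheory Filter Set Topology

lemma aux_exp_int (c : ℝ) (hc : c ≠ 0) (m : ℝ) :
    ∫ y in (0:ℝ)..m, Real.exp (c * y) = (Real.exp (c * m) - 1) / c := by
  have h : ∀ y : ℝ, HasDerivAt (fun y => Real.exp (c * y) / c) (Real.exp (c * y)) y := by
    intro y
    have h1 : HasDerivAt (fun y : ℝ => c * y) c y := by
      simpa using (hasDerivAt_id y).const_mul c
    have h2 := (Real.hasDerivAt_exp (c * y)).comp y h1
    simpa [mul_div_cancel_right₀ _ hc] using h2.div_const c
  rw [intervalIntegral.integral_eq_sub_of_hasDerivAt (fun y _ => h y)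
    ((Real.continuous_exp.comp (continuous_const.mul continuous_id)).intervalIntegrable _ _)]
  simp
  ring

lemma aux_antideriv (c : ℝ) (hc : c ≠ 0) (x : ℝ) :
    HasDerivAt (fun x => -((x / c + 1 / c ^ 2) * Real.exp (-(c * x))))
      (x * Real.exp (-(c * x))) x := by
  have h1 : HasDerivAt (fun x : ℝ => x / c + 1 / c ^ 2) (1 / c) x :=
    ((hasDerivAt_id x).div_const c).add_const _
  have h2 : HasDerivAt (fun x : ℝ => Real.exp (-(c * x))) (Real.exp (-(c * x)) * (-c)) x := by
    have hin : HasDerivAt (fun x : ℝ => -(c * x)) (-c) x := by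
      simpa using (hasDerivAt_neg x).const_mul c
    exact (Real.hasDerivAt_exp _).comp x hin
  have := (h1.mul h2).neg
  convert this using 1
  · rfl
  · rfl
  · rfl
  have hc1 : 1 / c * c = 1 := by field_simp
  linear_combination (-(x * Real.exp (-(c * x))) - Real.exp (-(c * x)) * (1 / c)) * hc1

lemma aux_tendsto (c : ℝ) (hc : 0 < c) :
    Tendsto (fun x => (x / c + 1 / c ^ 2) * Real.exp (-(c * x))) atTop (𝓝 0) := by
  have hct : Tendsto (fun x : ℝ => c * x) atTop atTop := by
    exact Tendsto.const_mul_atTop hc tendsto_id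
  have h1 : Tendsto (fun x : ℝ => (c * x) ^ 1 * Real.exp (-(c * x))) atTop (𝓝 0) := by
    have := (Real.tendsto_pow_mul_exp_neg_atTop_nhds_zero 1).comp hct
    simpa [Function.comp_def] using this
  have h2 : Tendsto (fun x : ℝ => Real.exp (-(c * x))) atTop (𝓝 0) := by
    exact Real.tendsto_exp_atBot.comp (tendsto_neg_atTop_atBot.comp hct)
  have := ((h1.const_mul (1 / c ^ 2)).add (h2.const_mul (1 / c ^ 2)))
  simp only [mul_zero, add_zero, zero_add] at this
  refine this.congr fun x => ?_
  field_simp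

theorem stmt_8 (x₀ e₀ : ℝ) (hx₀ : 0 < x₀) (he₀ : e₀ = 1 / x₀ ^ 2)
    (p : ℝ → ℝ)
    (hp : ∀ x, p x = 2 * e₀ * (∫ y in (0:ℝ)..(min x x₀), Real.exp (2 * x₀ * e₀ * y))
      * Real.exp (-(2 * x₀ * e₀ * x))) :
    (∫ x in Set.Ioi (0 : ℝ), x * p x) = x₀ := by
  have hx0' : x₀ ≠ 0 := ne_of_gt hx₀
  set c : ℝ := 2 / x₀ with hcdef
  have hc : 0 < c := by positivity
  have hce : 2 * x₀ * e₀ = c := by rw [he₀, hcdef]; field_simp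
  have hcx : c * x₀ = 2 := by rw [hcdef]; field_simp
  have hp' : ∀ x, p x = (1 / x₀) * ((Real.exp (c * min x x₀) - 1) * Real.exp (-(c * x))) := by
    intro x
    rw [hp, hce, aux_exp_int c hc.ne']
    rw [he₀, hcdef]
    field_simp
  set K : ℝ := (Real.exp 2 - 1) / x₀ with hK
  have hKnn : 0 ≤ K := by
    apply div_nonneg _ hx₀.le
    have := Real.one_le_exp (by norm_num : (0:ℝ) ≤ 2)
    linarith
  -- tail integral
  have htail_eq : EqOn (fun x => x * p x) (fun x => K * (x * Real.exp (-(c * x)))) (Ioi x₀) := by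
    intro x hx
    simp only [Set.mem_Ioi] at hx
    simp only [hp' x, min_eq_right hx.le, hcx, hK]
    ring
  have hderiv : ∀ x ∈ Ici x₀,
      HasDerivAt (fun x => K * -((x / c + 1 / c ^ 2) * Real.exp (-(c * x))))
        (K * (x * Real.exp (-(c * x)))) x :=
    fun x _ => (aux_antideriv c hc.ne' x).const_mul K
  have hnn : ∀ x ∈ Ioi x₀, 0 ≤ K * (x * Real.exp (-(c * x))) := by
    intro x hx
    simp only [Set.mem_Ioi] at hx
    have hxpos : 0 < x := lt_trans hx₀ hx
    positivity
  have htt : Tendsto (fun x => K * -((x / c + 1 / c ^ 2) * Real.exp (-(c * x)))) atTop (𝓝 0) := by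
    have := ((aux_tendsto c hc).neg).const_mul K
    simpa using this
  have hIoi : ∫ x in Ioi x₀, x * p x
      = 0 - K * -((x₀ / c + 1 / c ^ 2) * Real.exp (-(c * x₀))) := by
    rw [setIntegral_congr_fun measurableSet_Ioi htail_eq]
    exact integral_Ioi_of_hasDerivAt_of_nonneg' hderiv hnn htt
  have hIoiInt : IntegrableOn (fun x => x * p x) (Ioi x₀) := by
    rw [integrableOn_congr_fun htail_eq measurableSet_Ioi]
    exact integrableOn_Ioi_deriv_of_nonneg' hderiv hnn htt
  -- interval part
  have hcont : Continuous fun x => x * p x := by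
    have : (fun x => x * p x)
        = fun x => x * ((1 / x₀) * ((Real.exp (c * min x x₀) - 1) * Real.exp (-(c * x)))) :=
      funext fun x => by rw [hp' x]
    rw [this]
    fun_prop
  have hIocInt : IntegrableOn (fun x => x * p x) (Ioc 0 x₀) := hcont.integrableOn_Ioc
  have hIoc_eq : EqOn (fun x => x * p x)
      (fun x => (1 / x₀) * (x - x * Real.exp (-(c * x)))) (Ioc 0 x₀) := by
    intro x hx
    simp only [Set.mem_Ioc] at hx
    simp only [hp' x, min_eq_left hx.2]
    have h1 : Real.exp (c * x) * Real.exp (-(c * x)) = 1 := by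
      rw [← Real.exp_add]; simp
    field_simp
    have h1' : Real.exp (x * c) * Real.exp (-(x * c)) = 1 := by rw [← Real.exp_add]; simp
    linear_combination x * h1'
  have hIoc : ∫ x in Ioc 0 x₀, x * p x
      = (1 / x₀) * ((x₀ ^ 2 / 2 - -((x₀ / c + 1 / c ^ 2) * Real.exp (-(c * x₀))))
        - ((0:ℝ) ^ 2 / 2 - -((0 / c + 1 / c ^ 2) * Real.exp (-(c * 0))))) := by
    rw [setIntegral_congr_fun measurableSet_Ioc hIoc_eq,
      ← intervalIntegral.integral_of_le hx₀.le, intervalIntegral.integral_const_mul]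
    congr 1
    have hG : ∀ x : ℝ, HasDerivAt
        (fun x => x ^ 2 / 2 - -((x / c + 1 / c ^ 2) * Real.exp (-(c * x))))
        (x - x * Real.exp (-(c * x))) x := by
      intro x
      have hx2 : HasDerivAt (fun x : ℝ => x ^ 2 / 2) x x := by
        have := (hasDerivAt_pow 2 x).div_const 2
        norm_num at this
        simpa using this
      exact hx2.sub (aux_antideriv c hc.ne' x)
    exact intervalIntegral.integral_eq_sub_of_hasDerivAt (fun x _ => hG x)
      (Continuous.intervalIntegrable (by fun_prop) _ _)
  -- combine
  have hsplit : Ioi (0:ℝ) = Ioc 0 x₀ ∪ Ioi x₀ := (Set.Ioc_union_Ioi_eq_Ioi hx₀.le).symm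
  rw [hsplit, setIntegral_union (Set.Ioc_disjoint_Ioi le_rfl) measurableSet_Ioi hIocInt hIoiInt,
    hIoc, hIoi]
  have hE : Real.exp 2 * Real.exp (-(c * x₀)) = 1 := by
    rw [← Real.exp_add, hcx]; simp
  have h20 : c * x₀ = 2 := hcx
  rw [show -(c * x₀) = -2 by rw [h20]]
  simp only [mul_zero, neg_zero, Real.exp_zero, zero_div, zero_add, zero_sub]
  have hFE : Real.exp 2 * Real.exp (-2) = 1 := by rw [← Real.exp_add]; simp
  rw [hK, hcdef]
  field_simp
  linear_combination (3 * x₀ ^ 2) * hFE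
end

section
/- Let x₀ > 0, e₀ := 1/x₀², and p(x) = 2·e₀·(∫₀^{min(x, x₀)} e^{2·x₀·e₀·y} dy)·e^{−2·x₀·e₀·x}. Then p(0) = 0, p is continuous on [0, ∞), p is differentiable on (0, x₀) ∪ (x₀, ∞), the right derivative at 0 satisfies p'(0⁺) = 2·e₀, and the jump in derivative at x₀ satisfies p'(x₀⁺) − p'(x₀⁻) = −2·e₀. -/
open Set Real

theorem stmt_9 (x₀ e₀ : ℝ) (hx₀ : 0 < x₀) (he₀ : e₀ = 1 / x₀ ^ 2)
    (p : ℝ → ℝ)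
    (hp : ∀ x, p x = 2 * e₀ * (∫ y in (0:ℝ)..(min x x₀), Real.exp (2 * x₀ * e₀ * y))
      * Real.exp (-(2 * x₀ * e₀ * x))) :
    p 0 = 0 ∧
    ContinuousOn p (Set.Ici 0) ∧
    DifferentiableOn ℝ p (Set.Ioo 0 x₀ ∪ Set.Ioi x₀) ∧
    HasDerivWithinAt p (2 * e₀) (Set.Ici 0) 0 ∧
    derivWithin p (Set.Ici x₀) x₀ - derivWithin p (Set.Iic x₀) x₀ = -(2 * e₀) := by
  have he : 0 < e₀ := by rw [he₀]; positivity
  set c := 2 * x₀ * e₀ with hc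
  have hcpos : 0 < c := by positivity
  have hcne : c ≠ 0 := hcpos.ne'
  have hint : ∀ t : ℝ, (∫ y in (0:ℝ)..t, Real.exp (c * y)) = (Real.exp (c*t) - 1)/c := by
    intro t
    rw [intervalIntegral.integral_comp_mul_left (fun y => Real.exp y) hcne]
    simp [integral_exp, smul_eq_mul]
    ring
  set g : ℝ → ℝ := fun x => 2*e₀/c * (1 - Real.exp (-(c*x))) with hg
  set h : ℝ → ℝ := fun x => 2*e₀*((Real.exp (c*x₀) - 1)/c) * Real.exp (-(c*x)) with hh
  have hpg : ∀ x, x ≤ x₀ → p x = g x := by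
    intro x hx
    rw [hp x, min_eq_left hx, hint x, hg]
    simp only
    rw [Real.exp_neg]
    have := Real.exp_ne_zero (c*x)
    field_simp
  have hph : ∀ x, x₀ ≤ x → p x = h x := by
    intro x hx
    rw [hp x, min_eq_right hx, hint x₀]
  have hg' : ∀ x : ℝ, HasDerivAt g (2*e₀*Real.exp (-(c*x))) x := by
    intro x
    have h1 : HasDerivAt (fun x : ℝ => -(c*x)) (-(c*1)) x :=
      ((hasDerivAt_id x).const_mul c).neg
    have h2 := h1.exp
    have h3 := (h2.const_sub 1).const_mul (2*e₀/c)
    refine h3.congr_deriv ?_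
    field_simp
  have hh' : ∀ x : ℝ, HasDerivAt h (-(2*e₀)*(Real.exp (c*x₀)-1)*Real.exp (-(c*x))) x := by
    intro x
    have h1 : HasDerivAt (fun x : ℝ => -(c*x)) (-(c*1)) x :=
      ((hasDerivAt_id x).const_mul c).neg
    have h3 := h1.exp.const_mul (2*e₀*((Real.exp (c*x₀) - 1)/c))
    refine h3.congr_deriv ?_
    field_simp
  have hcont : Continuous p := by
    have : p = fun x => 2 * e₀ * ((Real.exp (c * min x x₀) - 1)/c)
        * Real.exp (-(c * x)) := by
      funext x; rw [hp x, hint]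
    rw [this]
    fun_prop
  refine ⟨?_, hcont.continuousOn, ?_, ?_, ?_⟩
  · rw [hp]; simp [min_eq_left hx₀.le]
  · rintro x (hx | hx)
    · have hev : p =ᶠ[nhds x] g := by
        filter_upwards [isOpen_Iio.mem_nhds hx.2] with y hy using hpg y (le_of_lt hy)
      exact (hev.differentiableAt_iff.mpr (hg' x).differentiableAt).differentiableWithinAt
    · have hev : p =ᶠ[nhds x] h := by
        filter_upwards [isOpen_Ioi.mem_nhds hx] with y hy using hph y (le_of_lt hy)
      exact (hev.differentiableAt_iff.mpr (hh' x).differentiableAt).differentiableWithinAt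
  · have hev : p =ᶠ[nhdsWithin 0 (Set.Ici 0)] g := by
      filter_upwards [mem_nhdsWithin_of_mem_nhds (isOpen_Iio.mem_nhds (show (0:ℝ) ∈ Iio x₀ from hx₀))] with y hy using hpg y hy.le
    have H := ((hg' 0).hasDerivWithinAt).congr_of_eventuallyEq hev (hpg 0 hx₀.le)
    simpa using H
  · have HR : HasDerivWithinAt p (2*e₀*Real.exp (-(c*x₀)) - 2*e₀) (Set.Ici x₀) x₀ := by
      have := ((hh' x₀).hasDerivWithinAt).congr (fun y (hy : y ∈ Set.Ici x₀) => hph y hy) (hph x₀ le_rfl)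
      refine this.congr_deriv ?_
      rw [Real.exp_neg (c*x₀)]
      have := Real.exp_ne_zero (c*x₀)
      field_simp
      ring
    have HL : HasDerivWithinAt p (2*e₀*Real.exp (-(c*x₀))) (Set.Iic x₀) x₀ :=
      ((hg' x₀).hasDerivWithinAt).congr (fun y hy => hpg y hy) (hpg x₀ le_rfl)
    rw [HR.derivWithin (uniqueDiffOn_Ici x₀ x₀ Set.self_mem_Ici), HL.derivWithin (uniqueDiffOn_Iic x₀ x₀ Set.self_mem_Iic)]
    ring
end

section
/- Let a > 0, x₀ > 0, e₀ > 0, and define for x ≥ 0 the function p(x) = 2·e₀·(∫₀^{min(x, x₀)} e^{a·y² + 2·x₀·(e₀ − a)·y} dy)·e^{−a·x² − 2·x₀·(e₀ − a)·x}. If ∫₀^∞ p(x) dx = 1, then ∫₀^∞ x·p(x) dx = x₀ if and only if the first-moment identity −(x₀/a)·(e₀ − a)·∫₀^∞ p(x) dx + (e₀/a)·x₀ = x₀ holds; in particular ∫₀^∞ x·p(x) dx = x₀. -/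
open MeasureTheory Set Filter Real

private lemma expE_hasDerivAt (a c x : ℝ) :
    HasDerivAt (fun x : ℝ => Real.exp (-(a * x ^ 2) - c * x))
      (-(2 * a * x + c) * Real.exp (-(a * x ^ 2) - c * x)) x := by
  have h1 : HasDerivAt (fun x : ℝ => -(a * x ^ 2) - c * x) (-(2 * a * x + c)) x := by
    have h := (((hasDerivAt_pow 2 x).const_mul a).neg).sub ((hasDerivAt_id x).const_mul c)
    refine h.congr_deriv ?_
    push_cast
    ring
  simpa [mul_comm] using h1.exp

private lemma transl_integrable {f : ℝ → ℝ} (hf : Integrable f) (d : ℝ) :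
    Integrable (fun x : ℝ => f (x + d)) := by
  have h := (measurePreserving_add_right (volume : Measure ℝ) d).integrable_comp
    hf.aestronglyMeasurable
  exact h.2 hf

private lemma integrable_E (a c : ℝ) (ha : 0 < a) :
    Integrable (fun x : ℝ => Real.exp (-(a * x ^ 2) - c * x)) := by
  have ha' : a ≠ 0 := ne_of_gt ha
  set d : ℝ := c / (2 * a) with hd
  have key : ∀ x : ℝ, Real.exp (-(a * x ^ 2) - c * x)
      = Real.exp (a * d ^ 2) * Real.exp (-a * (x + d) ^ 2) := by
    intro x
    rw [← Real.exp_add]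
    congr 1
    rw [hd]
    field_simp
    ring
  have h0 : Integrable (fun y : ℝ => Real.exp (-a * y ^ 2)) := integrable_exp_neg_mul_sq ha
  have h1 : Integrable (fun x : ℝ => Real.exp (-a * (x + d) ^ 2)) := transl_integrable h0 d
  exact (h1.const_mul (Real.exp (a * d ^ 2))).congr (ae_of_all _ fun x => (key x).symm)

private lemma integrable_xE (a c : ℝ) (ha : 0 < a) :
    Integrable (fun x : ℝ => x * Real.exp (-(a * x ^ 2) - c * x)) := by
  have ha' : a ≠ 0 := ne_of_gt ha
  set d : ℝ := c / (2 * a) with hd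
  have key : ∀ x : ℝ, x * Real.exp (-(a * x ^ 2) - c * x)
      = Real.exp (a * d ^ 2) * ((x + d) * Real.exp (-a * (x + d) ^ 2))
        - (Real.exp (a * d ^ 2) * d) * Real.exp (-a * (x + d) ^ 2) := by
    intro x
    have hexp : Real.exp (-(a * x ^ 2) - c * x)
        = Real.exp (a * d ^ 2) * Real.exp (-a * (x + d) ^ 2) := by
      rw [← Real.exp_add]
      congr 1
      rw [hd]
      field_simp
      ring
    rw [hexp]
    ring
  have h0 : Integrable (fun y : ℝ => y * Real.exp (-a * y ^ 2)) := integrable_mul_exp_neg_mul_sq ha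
  have h1 : Integrable (fun x : ℝ => (x + d) * Real.exp (-a * (x + d) ^ 2)) :=
    transl_integrable h0 d
  have h2 : Integrable (fun x : ℝ => Real.exp (-a * (x + d) ^ 2)) :=
    transl_integrable (integrable_exp_neg_mul_sq ha) d
  exact ((h1.const_mul (Real.exp (a * d ^ 2))).sub
    (h2.const_mul (Real.exp (a * d ^ 2) * d))).congr (ae_of_all _ fun x => (key x).symm)

private lemma tendsto_E (a c : ℝ) (ha : 0 < a) :
    Tendsto (fun x : ℝ => Real.exp (-(a * x ^ 2) - c * x)) atTop (nhds 0) := by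
  have ha' : a ≠ 0 := ne_of_gt ha
  set d : ℝ := c / (2 * a) with hd
  have h1 : Tendsto (fun x : ℝ => a * x ^ 2 + c * x) atTop atTop := by
    have h2 : Tendsto (fun x : ℝ => x + d) atTop atTop :=
      tendsto_atTop_add_const_right _ _ tendsto_id
    have h3 : Tendsto (fun x : ℝ => (x + d) ^ 2) atTop atTop :=
      (tendsto_pow_atTop two_ne_zero).comp h2
    have h4 : Tendsto (fun x : ℝ => a * (x + d) ^ 2) atTop atTop :=
      h3.const_mul_atTop ha
    have h5 := tendsto_atTop_add_const_right _ (-(a * d ^ 2)) h4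
    refine h5.congr fun x => ?_
    rw [hd]
    field_simp
    ring
  have h6 : Tendsto (fun x : ℝ => -(a * x ^ 2) - c * x) atTop atBot := by
    have := tendsto_neg_atTop_atBot.comp h1
    refine this.congr fun x => ?_
    simp [Function.comp]
    ring
  exact Real.tendsto_exp_atBot.comp h6

theorem stmt_10 (a x₀ e₀ : ℝ) (ha : 0 < a) (hx₀ : 0 < x₀) (he₀ : 0 < e₀)
    (p : ℝ → ℝ)
    (hp : ∀ x, p x = 2 * e₀ *
      (∫ y in (0:ℝ)..(min x x₀), Real.exp (a * y ^ 2 + 2 * x₀ * (e₀ - a) * y))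
      * Real.exp (-(a * x ^ 2) - 2 * x₀ * (e₀ - a) * x))
    (hnorm : (∫ x in Set.Ioi (0 : ℝ), p x) = 1) :
    ((∫ x in Set.Ioi (0 : ℝ), x * p x) = x₀ ↔
      -(x₀ / a) * (e₀ - a) * (∫ x in Set.Ioi (0 : ℝ), p x) + (e₀ / a) * x₀ = x₀) ∧
    (∫ x in Set.Ioi (0 : ℝ), x * p x) = x₀ := by
  have ha' : a ≠ 0 := ne_of_gt ha
  set c : ℝ := 2 * x₀ * (e₀ - a) with hc
  set E : ℝ → ℝ := fun x => Real.exp (-(a * x ^ 2) - c * x) with hE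
  set A : ℝ → ℝ := fun x => ∫ y in (0:ℝ)..x, Real.exp (a * y ^ 2 + c * y) with hA
  set g : ℝ → ℝ := fun x => A x * E x with hg
  -- rewrite p everywhere
  have hpfun : p = fun x => 2 * e₀ * (A (min x x₀) * E x) := by
    funext x
    rw [hp x]
    simp only [hA, hE]
    ring
  rw [hpfun] at hnorm ⊢
  clear hpfun hp
  -- basic continuity
  have hcontφ : Continuous (fun y : ℝ => Real.exp (a * y ^ 2 + c * y)) := by fun_prop
  have hcontA : Continuous A := by
    rw [hA]
    exact intervalIntegral.continuous_primitive (fun u v => hcontφ.intervalIntegrable u v) 0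
  have hcontE : Continuous E := by rw [hE]; fun_prop
  have hcontg : Continuous g := by rw [hg]; exact hcontA.mul hcontE
  have hcontq : Continuous (fun x => 2 * e₀ * (A (min x x₀) * E x)) :=
    continuous_const.mul ((hcontA.comp (continuous_id.min continuous_const)).mul hcontE)
  -- derivatives
  have hEderiv : ∀ x, HasDerivAt E (-(2 * a * x + c) * E x) x := by
    intro x
    rw [hE]
    exact expE_hasDerivAt a c x
  have hAderiv : ∀ x, HasDerivAt A (Real.exp (a * x ^ 2 + c * x)) x := by
    intro x
    rw [hA]
    exact (hcontφ.integral_hasStrictDerivAt 0 x).hasDerivAt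
  have hgderiv : ∀ x, HasDerivAt g (1 - (2 * a * x + c) * g x) x := by
    intro x
    have h := (hAderiv x).mul (hEderiv x)
    have h2 : Real.exp (a * x ^ 2 + c * x) * E x = 1 := by
      rw [hE]
      simp only
      rw [← Real.exp_add]
      norm_num
    rw [hg]
    refine h.congr_deriv ?_
    beta_reduce
    rw [← h2]
    ring
  have hg0 : g 0 = 0 := by simp [hg, hA]
  -- integrability
  have hIntE : Integrable E := by rw [hE]; exact integrable_E a c ha
  have hIntxE : Integrable (fun x => x * E x) := by rw [hE]; exact integrable_xE a c ha
  -- split of the domain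
  have hsplit : ∀ f : ℝ → ℝ, IntegrableOn f (Ioc 0 x₀) → IntegrableOn f (Ioi x₀) →
      (∫ x in Ioi (0:ℝ), f x) = (∫ x in Ioc (0:ℝ) x₀, f x) + ∫ x in Ioi x₀, f x := by
    intro f h1 h2
    rw [← Set.Ioc_union_Ioi_eq_Ioi hx₀.le,
      setIntegral_union Set.Ioc_disjoint_Ioi_same measurableSet_Ioi h1 h2]
  -- equalities on pieces
  have hq_Ioc : EqOn (fun x => 2 * e₀ * (A (min x x₀) * E x)) (fun x => 2 * e₀ * g x)
      (Ioc (0:ℝ) x₀) := by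
    intro x hx
    simp only [hg, min_eq_left hx.2]
  have hq_Ioi : EqOn (fun x => 2 * e₀ * (A (min x x₀) * E x))
      (fun x => (2 * e₀ * A x₀) * E x) (Ioi x₀) := by
    intro x hx
    simp only [min_eq_right (le_of_lt (Set.mem_Ioi.mp hx)), mul_assoc]
  have hxq_Ioc : EqOn (fun x => x * (2 * e₀ * (A (min x x₀) * E x)))
      (fun x => 2 * e₀ * (x * g x)) (Ioc (0:ℝ) x₀) := by
    intro x hx
    simp only [hg, min_eq_left hx.2]
    ring
  have hxq_Ioi : EqOn (fun x => x * (2 * e₀ * (A (min x x₀) * E x)))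
      (fun x => (2 * e₀ * A x₀) * (x * E x)) (Ioi x₀) := by
    intro x hx
    simp only [min_eq_right (le_of_lt (Set.mem_Ioi.mp hx))]
    ring
  -- integrability of pieces
  have hInt_q_Ioc : IntegrableOn (fun x => 2 * e₀ * (A (min x x₀) * E x)) (Ioc (0:ℝ) x₀) :=
    hcontq.integrableOn_Ioc
  have hInt_xq_Ioc : IntegrableOn (fun x => x * (2 * e₀ * (A (min x x₀) * E x)))
      (Ioc (0:ℝ) x₀) := (continuous_id.mul hcontq).integrableOn_Ioc
  have hInt_q_Ioi : IntegrableOn (fun x => 2 * e₀ * (A (min x x₀) * E x)) (Ioi x₀) :=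
    ((hIntE.const_mul (2 * e₀ * A x₀)).integrableOn).congr_fun hq_Ioi.symm measurableSet_Ioi
  have hInt_xq_Ioi : IntegrableOn (fun x => x * (2 * e₀ * (A (min x x₀) * E x))) (Ioi x₀) :=
    ((hIntxE.const_mul (2 * e₀ * A x₀)).integrableOn).congr_fun hxq_Ioi.symm measurableSet_Ioi
  -- Ioc computations
  have hIoc_g_interval : (∫ x in Ioc (0:ℝ) x₀, g x) = ∫ x in (0:ℝ)..x₀, g x :=
    (intervalIntegral.integral_of_le hx₀.le).symm
  have hftc : (∫ x in (0:ℝ)..x₀, (1 - (2 * a * x + c) * g x)) = g x₀ - g 0 := by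
    apply intervalIntegral.integral_eq_sub_of_hasDerivAt (fun x _ => hgderiv x)
    apply Continuous.intervalIntegrable
    fun_prop
  have hderiv_cont : Continuous (fun x => 1 - (2 * a * x + c) * g x) := by fun_prop
  have hIoc_xg : (∫ x in (0:ℝ)..x₀, x * g x)
      = (1 / (2 * a)) * (x₀ - g x₀) - (c / (2 * a)) * ∫ x in (0:ℝ)..x₀, g x := by
    have hfun : ∀ x : ℝ, x * g x
        = (1 / (2 * a)) * (1 - (1 - (2 * a * x + c) * g x)) - (c / (2 * a)) * g x := by
      intro x
      field_simp
      ring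
    have hI1 : IntervalIntegrable (fun _ : ℝ => (1:ℝ)) volume 0 x₀ :=
      continuous_const.intervalIntegrable _ _
    have hI2 : IntervalIntegrable (fun x => 1 - (2 * a * x + c) * g x) volume 0 x₀ :=
      hderiv_cont.intervalIntegrable _ _
    have hI3 : IntervalIntegrable
        (fun x => (1 / (2 * a)) * (1 - (1 - (2 * a * x + c) * g x))) volume 0 x₀ :=
      (continuous_const.mul (continuous_const.sub hderiv_cont)).intervalIntegrable _ _
    have hI4 : IntervalIntegrable (fun x => (c / (2 * a)) * g x) volume 0 x₀ :=
      (continuous_const.mul hcontg).intervalIntegrable _ _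
    rw [intervalIntegral.integral_congr (fun x _ => hfun x),
      intervalIntegral.integral_sub hI3 hI4,
      intervalIntegral.integral_const_mul, intervalIntegral.integral_const_mul,
      intervalIntegral.integral_sub hI1 hI2, hftc, hg0,
      intervalIntegral.integral_const]
    simp
  -- Ioi computations
  have hF : ∀ x, HasDerivAt (fun x => -(1 / (2 * a)) * E x) ((x + c / (2 * a)) * E x) x := by
    intro x
    have h := (hEderiv x).const_mul (-(1 / (2 * a)))
    refine h.congr_deriv ?_
    field_simp
  have hFsum : (fun x : ℝ => (x + c / (2 * a)) * E x)
      = fun x => x * E x + (c / (2 * a)) * E x := by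
    funext x; ring
  have hFint : IntegrableOn (fun x => (x + c / (2 * a)) * E x) (Ioi x₀) := by
    rw [hFsum]
    exact (hIntxE.add (hIntE.const_mul _)).integrableOn
  have hFtend : Tendsto (fun x => -(1 / (2 * a)) * E x) atTop (nhds 0) := by
    have := (by rw [hE]; exact tendsto_E a c ha :
      Tendsto E atTop (nhds 0)).const_mul (-(1 / (2 * a)))
    simpa using this
  have hIoi1 : (∫ x in Ioi x₀, (x + c / (2 * a)) * E x) = (1 / (2 * a)) * E x₀ := by
    rw [integral_Ioi_of_hasDerivAt_of_tendsto' (fun x _ => hF x) hFint hFtend]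
    ring
  have hIoi_xE : (∫ x in Ioi x₀, x * E x)
      = (1 / (2 * a)) * E x₀ - (c / (2 * a)) * ∫ x in Ioi x₀, E x := by
    rw [hFsum] at hIoi1
    rw [integral_add hIntxE.integrableOn (hIntE.const_mul _).integrableOn,
      integral_const_mul] at hIoi1
    linarith
  -- assemble the normalization
  have hnorm2 : 2 * e₀ * (∫ x in Ioc (0:ℝ) x₀, g x)
      + (2 * e₀ * A x₀) * (∫ x in Ioi x₀, E x) = 1 := by
    rw [hsplit _ hInt_q_Ioc hInt_q_Ioi] at hnorm
    rw [setIntegral_congr_fun measurableSet_Ioc hq_Ioc,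
      setIntegral_congr_fun measurableSet_Ioi hq_Ioi, integral_const_mul, integral_const_mul] at hnorm
    exact hnorm
  -- assemble the first moment
  have hmain : (∫ x in Ioi (0:ℝ), x * (2 * e₀ * (A (min x x₀) * E x))) = x₀ := by
    rw [hsplit _ hInt_xq_Ioc hInt_xq_Ioi,
      setIntegral_congr_fun measurableSet_Ioc hxq_Ioc,
      setIntegral_congr_fun measurableSet_Ioi hxq_Ioi, integral_const_mul, integral_const_mul,
      show (∫ x in Ioc (0:ℝ) x₀, x * g x) = ∫ x in (0:ℝ)..x₀, x * g x from
        (intervalIntegral.integral_of_le hx₀.le).symm,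
      hIoc_xg, hIoi_xE]
    rw [hIoc_g_interval] at hnorm2
    have hgx₀ : g x₀ = A x₀ * E x₀ := by rw [hg]
    rw [hgx₀]
    set G₁ := ∫ x in (0:ℝ)..x₀, g x with hG₁
    set G₂ := ∫ x in Ioi x₀, E x with hG₂
    set A₀ := A x₀ with hA₀
    set E₀ := E x₀ with hE₀
    field_simp
    linear_combination (-c) * hnorm2 - hc + (x₀ * (e₀ - a)) * hnorm2
  refine ⟨?_, hmain⟩
  constructor
  · intro _
    rw [hnorm]
    field_simp
    ring
  · intro _
    exact hmain
end

section
/- Let a > 0, x₀ > 0, τ := √(2a), and define F(u) := (1/τ²)·∫_{(2x₀u/τ) − τx₀}^{2x₀u/τ} e^{y²/2}·(∫_y^∞ e^{−x²/2} dx) dy. Then for every u > τ²/2, (1/(2τ²))·log((τ² + 4x₀²u²)/(τ² + (2x₀u − τ²x₀)²)) ≤ F(u) ≤ (1/τ²)·log(2u/(2u − τ²)). In particular F(u) → 0 as u → ∞. -/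
open MeasureTheory Real Set Filter

lemma gauss_int : Integrable (fun x : ℝ => Real.exp (-x^2/2)) := by
  have h : (fun x : ℝ => Real.exp (-x^2/2)) = fun x => Real.exp (-(1/2)*x^2) := by
    funext x; ring_nf
  rw [h]; exact integrable_exp_neg_mul_sq (by norm_num)

lemma gauss_xint : Integrable (fun x : ℝ => x * Real.exp (-x^2/2)) := by
  have h : (fun x : ℝ => x * Real.exp (-x^2/2)) = fun x => x * Real.exp (-(1/2)*x^2) := by
    funext x; ring_nf
  rw [h]; exact integrable_mul_exp_neg_mul_sq (by norm_num)

lemma gauss_tendsto : Tendsto (fun x : ℝ => Real.exp (-x^2/2)) atTop (nhds 0) := by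
  apply Real.tendsto_exp_atBot.comp
  have h1 : Tendsto (fun x : ℝ => x^2/2) atTop atTop :=
    (tendsto_pow_atTop (by norm_num)).atTop_div_const (by norm_num)
  simpa [neg_div] using tendsto_neg_atBot_iff.2 h1

lemma exp_deriv (x : ℝ) : HasDerivAt (fun x : ℝ => Real.exp (-x^2/2)) (Real.exp (-x^2/2) * (-x)) x := by
  have h1 : HasDerivAt (fun x : ℝ => -x^2/2) (-x) x := by
    have := ((hasDerivAt_pow 2 x).div_const 2).fun_neg
    convert this using 1
    · rfl
    · rfl
    · funext y; ring
    · push_cast; ring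
  exact h1.exp

lemma tail_upper (y : ℝ) (hy : 0 < y) :
    (∫ x in Set.Ioi y, Real.exp (-x^2/2)) ≤ Real.exp (-y^2/2) / y := by
  have key : ∫ x in Set.Ioi y, x * Real.exp (-x^2/2) = Real.exp (-y^2/2) := by
    have h := integral_Ioi_of_hasDerivAt_of_tendsto'
      (f := fun x : ℝ => -Real.exp (-x^2/2)) (f' := fun x : ℝ => x * Real.exp (-x^2/2))
      (a := y) (m := 0) ?_ ?_ ?_
    · rw [h]; ring
    · intro x _
      have := (exp_deriv x).fun_neg
      convert this using 1; ring
    · exact gauss_xint.integrableOn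
    · simpa using gauss_tendsto.neg
  calc (∫ x in Set.Ioi y, Real.exp (-x^2/2))
      ≤ ∫ x in Set.Ioi y, (1/y) * (x * Real.exp (-x^2/2)) := by
        apply setIntegral_mono_on gauss_int.integrableOn
          (gauss_xint.integrableOn.const_mul _) measurableSet_Ioi
        intro x hx
        have hx' : y < x := hx
        have h1 : 1 ≤ x/y := (one_le_div hy).2 hx'.le
        have := le_mul_of_one_le_left (Real.exp_pos (-x^2/2)).le h1
        calc Real.exp (-x^2/2) ≤ (x/y) * Real.exp (-x^2/2) := this
          _ = (1/y) * (x * Real.exp (-x^2/2)) := by ring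
    _ = (1/y) * ∫ x in Set.Ioi y, x * Real.exp (-x^2/2) := by
        rw [MeasureTheory.integral_const_mul]
    _ = Real.exp (-y^2/2) / y := by rw [key]; ring

lemma h_deriv (x : ℝ) : HasDerivAt (fun x : ℝ => x/(1+x^2) * Real.exp (-x^2/2))
    ((2/(1+x^2)^2 - 1) * Real.exp (-x^2/2)) x := by
  have hne : (1:ℝ) + x^2 ≠ 0 := by positivity
  have d1 : HasDerivAt (fun x : ℝ => x/(1+x^2))
      ((1*(1+x^2) - x*((2:ℕ)*x^(2-1)))/(1+x^2)^2) x :=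
    (hasDerivAt_id x).div ((hasDerivAt_pow 2 x).const_add 1) hne
  have d2 := d1.mul (exp_deriv x)
  convert d2 using 1
  · rfl
  · rfl
  · rfl
  field_simp
  ring

lemma h_tendsto : Tendsto (fun x : ℝ => x/(1+x^2) * Real.exp (-x^2/2)) atTop (nhds 0) := by
  apply tendsto_of_tendsto_of_tendsto_of_le_of_le' tendsto_const_nhds gauss_tendsto
  · filter_upwards [eventually_ge_atTop (0:ℝ)] with x hx
    positivity
  · filter_upwards [eventually_ge_atTop (0:ℝ)] with x hx
    have h1 : x/(1+x^2) ≤ 1 := by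
      rw [div_le_one (by positivity)]; nlinarith
    calc x/(1+x^2) * Real.exp (-x^2/2) ≤ 1 * Real.exp (-x^2/2) :=
          mul_le_mul_of_nonneg_right h1 (Real.exp_pos _).le
      _ = Real.exp (-x^2/2) := one_mul _

lemma hprime_int : Integrable (fun x : ℝ => (1 - 2/(1+x^2)^2) * Real.exp (-x^2/2)) := by
  apply gauss_int.mono
  · apply Continuous.aestronglyMeasurable
    have hd : Continuous fun x : ℝ => 2 / (1 + x ^ 2) ^ 2 :=
      continuous_const.div (by continuity) (fun x => by positivity)
    exact (continuous_const.sub hd).mul (by continuity)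
  · filter_upwards with x
    rw [Real.norm_eq_abs, Real.norm_eq_abs, abs_mul, Real.abs_exp]
    have h2 : (1:ℝ) ≤ (1+x^2)^2 := by nlinarith [sq_nonneg x]
    have h3 : 0 ≤ 2/(1+x^2)^2 := by positivity
    have h4 : 2/(1+x^2)^2 ≤ 2 := by
      rw [div_le_iff₀ (by positivity)]; nlinarith
    have : |1 - 2/(1+x^2)^2| ≤ 1 := abs_le.2 ⟨by linarith, by linarith⟩
    calc |1 - 2/(1+x^2)^2| * Real.exp (-x^2/2) ≤ 1 * Real.exp (-x^2/2) :=
        mul_le_mul_of_nonneg_right this (Real.exp_pos _).le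
      _ = Real.exp (-x^2/2) := one_mul _

lemma tail_lower (y : ℝ) (hy : 0 < y) :
    y/(1+y^2) * Real.exp (-y^2/2) ≤ ∫ x in Set.Ioi y, Real.exp (-x^2/2) := by
  have key : ∫ x in Set.Ioi y, (1 - 2/(1+x^2)^2) * Real.exp (-x^2/2)
      = y/(1+y^2) * Real.exp (-y^2/2) := by
    have h := integral_Ioi_of_hasDerivAt_of_tendsto'
      (f := fun x : ℝ => -(x/(1+x^2) * Real.exp (-x^2/2)))
      (f' := fun x : ℝ => (1 - 2/(1+x^2)^2) * Real.exp (-x^2/2))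
      (a := y) (m := 0) ?_ ?_ ?_
    · rw [h]; ring
    · intro x _
      have := (h_deriv x).fun_neg
      convert this using 1; ring
    · exact hprime_int.integrableOn
    · simpa using h_tendsto.neg
  rw [← key]
  apply setIntegral_mono_on hprime_int.integrableOn gauss_int.integrableOn measurableSet_Ioi
  intro x _
  have h3 : 0 ≤ 2/(1+x^2)^2 := by positivity
  nlinarith [Real.exp_pos (-x^2/2), mul_nonneg h3 (Real.exp_pos (-x^2/2)).le]

lemma G_eq (y : ℝ) (hy : 0 ≤ y) :
    (∫ x in Set.Ioi y, Real.exp (-x^2/2))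
      = (∫ x in Set.Ioi (0:ℝ), Real.exp (-x^2/2)) - ∫ x in (0:ℝ)..y, Real.exp (-x^2/2) := by
  rw [intervalIntegral.integral_of_le hy, ← Set.Ioc_union_Ioi_eq_Ioi hy,
    MeasureTheory.setIntegral_union (Set.Ioc_disjoint_Ioi le_rfl) measurableSet_Ioi
      gauss_int.integrableOn gauss_int.integrableOn]
  ring

lemma G_contOn : ContinuousOn (fun y => ∫ x in Set.Ioi y, Real.exp (-x^2/2)) (Set.Ici 0) := by
  have hc : Continuous fun y : ℝ =>
      (∫ x in Set.Ioi (0:ℝ), Real.exp (-x^2/2)) - ∫ x in (0:ℝ)..y, Real.exp (-x^2/2) :=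
    continuous_const.sub (gauss_int.continuous_primitive 0)
  exact hc.continuousOn.congr fun y hy => G_eq y hy

theorem stmt_12 (a x₀ τ : ℝ) (ha : 0 < a) (hx₀ : 0 < x₀) (hτ : τ = Real.sqrt (2 * a))
    (F : ℝ → ℝ)
    (hF : ∀ u, F u = (1 / τ ^ 2) *
      ∫ y in (2 * x₀ * u / τ - τ * x₀)..(2 * x₀ * u / τ),
        Real.exp (y ^ 2 / 2) * ∫ x in Set.Ioi y, Real.exp (-x ^ 2 / 2)) :
    (∀ u, τ ^ 2 / 2 < u →
      (1 / (2 * τ ^ 2)) *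
          Real.log ((τ ^ 2 + 4 * x₀ ^ 2 * u ^ 2) / (τ ^ 2 + (2 * x₀ * u - τ ^ 2 * x₀) ^ 2))
        ≤ F u ∧
      F u ≤ (1 / τ ^ 2) * Real.log (2 * u / (2 * u - τ ^ 2))) ∧
    Filter.Tendsto F Filter.atTop (nhds 0) := by
  have hτ0 : 0 < τ := by
    rw [hτ]; exact Real.sqrt_pos.2 (by linarith)
  have hτne : τ ≠ 0 := hτ0.ne'
  have hτ2 : 0 < τ ^ 2 := by positivity
  have main : ∀ u, τ ^ 2 / 2 < u →
      (1 / (2 * τ ^ 2)) *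
          Real.log ((τ ^ 2 + 4 * x₀ ^ 2 * u ^ 2) / (τ ^ 2 + (2 * x₀ * u - τ ^ 2 * x₀) ^ 2))
        ≤ F u ∧
      F u ≤ (1 / τ ^ 2) * Real.log (2 * u / (2 * u - τ ^ 2)) := by
    intro u hu
    obtain ⟨c, hc⟩ : ∃ c : ℝ, c = 2 * x₀ * u / τ := ⟨_, rfl⟩
    obtain ⟨bl, hbl⟩ : ∃ b : ℝ, b = 2 * x₀ * u / τ - τ * x₀ := ⟨_, rfl⟩
    have h2u : 0 < 2 * u - τ ^ 2 := by linarith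
    have hblpos : 0 < bl := by
      have : bl = x₀ * (2 * u - τ ^ 2) / τ := by
        rw [hbl]; field_simp [hτne]
      rw [this]; positivity
    have hblc : bl < c := by
      have : c - bl = τ * x₀ := by rw [hbl, hc]; ring
      nlinarith [mul_pos hτ0 hx₀]
    have hcpos : 0 < c := lt_trans hblpos hblc
    -- interval integrability of the middle integrand
    have hsub : Set.uIcc bl c ⊆ Set.Ici (0:ℝ) := by
      rw [Set.uIcc_of_le hblc.le]
      exact fun x hx => le_trans hblpos.le hx.1
    have hcontmid : ContinuousOn
        (fun y => Real.exp (y ^ 2 / 2) * ∫ x in Set.Ioi y, Real.exp (-x ^ 2 / 2))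
        (Set.uIcc bl c) := by
      apply ContinuousOn.mul
      · exact (Real.continuous_exp.comp (by continuity)).continuousOn
      · exact (G_contOn.mono hsub).congr (fun y _ => by norm_num)
    have hII : IntervalIntegrable
        (fun y => Real.exp (y ^ 2 / 2) * ∫ x in Set.Ioi y, Real.exp (-x ^ 2 / 2))
        volume bl c := hcontmid.intervalIntegrable
    -- the two bounding integrals
    have hIIlow : IntervalIntegrable (fun y : ℝ => y / (1 + y ^ 2)) volume bl c := by
      apply ContinuousOn.intervalIntegrable
      exact continuousOn_id.div ((continuous_const.add (continuous_pow 2)).continuousOn)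
        (fun y _ => by positivity)
    have hIIup : IntervalIntegrable (fun y : ℝ => 1 / y) volume bl c := by
      apply ContinuousOn.intervalIntegrable
      apply continuousOn_const.div continuousOn_id
      intro y hy
      rw [Set.uIcc_of_le hblc.le] at hy
      exact ne_of_gt (lt_of_lt_of_le hblpos hy.1)
    have hIlow : ∫ y in bl..c, y / (1 + y ^ 2)
        = Real.log (1 + c ^ 2) / 2 - Real.log (1 + bl ^ 2) / 2 := by
      have h := intervalIntegral.integral_eq_sub_of_hasDerivAt
        (f := fun y : ℝ => Real.log (1 + y ^ 2) / 2)
        (f' := fun y : ℝ => y / (1 + y ^ 2)) (a := bl) (b := c) ?_ hIIlow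
      · simpa using h
      · intro y _
        have hne : (1:ℝ) + y ^ 2 ≠ 0 := by positivity
        have := (((hasDerivAt_pow 2 y).const_add 1).log hne).div_const 2
        convert this using 1
        · rfl
        push_cast
        field_simp
    have hIup : ∫ y in bl..c, 1 / y = Real.log (c / bl) := by
      apply integral_one_div
      rw [Set.uIcc_of_le hblc.le]
      exact fun h => absurd h.1 (not_le.2 hblpos)
    -- pointwise bounds on [bl, c]
    have hexp1 : ∀ y : ℝ, Real.exp (y ^ 2 / 2) * Real.exp (-y ^ 2 / 2) = 1 := by
      intro y
      rw [← Real.exp_add, show y ^ 2 / 2 + -y ^ 2 / 2 = 0 from by ring, Real.exp_zero]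
    have hptlow : ∀ y ∈ Set.Icc bl c, y / (1 + y ^ 2)
        ≤ Real.exp (y ^ 2 / 2) * ∫ x in Set.Ioi y, Real.exp (-x ^ 2 / 2) := by
      intro y hy
      have hy0 : 0 < y := lt_of_lt_of_le hblpos hy.1
      have ht := tail_lower y hy0
      have step : Real.exp (y ^ 2 / 2) * (y / (1 + y ^ 2) * Real.exp (-y ^ 2 / 2))
          ≤ Real.exp (y ^ 2 / 2) * ∫ x in Set.Ioi y, Real.exp (-x ^ 2 / 2) :=
        mul_le_mul_of_nonneg_left ht (Real.exp_pos _).le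
      calc y / (1 + y ^ 2)
          = Real.exp (y ^ 2 / 2) * (y / (1 + y ^ 2) * Real.exp (-y ^ 2 / 2)) := by
            rw [show Real.exp (y ^ 2 / 2) * (y / (1 + y ^ 2) * Real.exp (-y ^ 2 / 2))
              = (Real.exp (y ^ 2 / 2) * Real.exp (-y ^ 2 / 2)) * (y / (1 + y ^ 2)) from by ring,
              hexp1, one_mul]
        _ ≤ _ := step
    have hptup : ∀ y ∈ Set.Icc bl c,
        Real.exp (y ^ 2 / 2) * (∫ x in Set.Ioi y, Real.exp (-x ^ 2 / 2)) ≤ 1 / y := by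
      intro y hy
      have hy0 : 0 < y := lt_of_lt_of_le hblpos hy.1
      have ht := tail_upper y hy0
      calc Real.exp (y ^ 2 / 2) * (∫ x in Set.Ioi y, Real.exp (-x ^ 2 / 2))
          ≤ Real.exp (y ^ 2 / 2) * (Real.exp (-y ^ 2 / 2) / y) :=
            mul_le_mul_of_nonneg_left ht (Real.exp_pos _).le
        _ = (Real.exp (y ^ 2 / 2) * Real.exp (-y ^ 2 / 2)) / y := by ring
        _ = 1 / y := by rw [hexp1]
    have hmono1 : (∫ y in bl..c, y / (1 + y ^ 2))
        ≤ ∫ y in bl..c, Real.exp (y ^ 2 / 2) * ∫ x in Set.Ioi y, Real.exp (-x ^ 2 / 2) :=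
      intervalIntegral.integral_mono_on hblc.le hIIlow hII hptlow
    have hmono2 : (∫ y in bl..c, Real.exp (y ^ 2 / 2) * ∫ x in Set.Ioi y, Real.exp (-x ^ 2 / 2))
        ≤ ∫ y in bl..c, 1 / y :=
      intervalIntegral.integral_mono_on hblc.le hII hIIup hptup
    constructor
    · have e1 : (1 / (2 * τ ^ 2)) *
          Real.log ((τ ^ 2 + 4 * x₀ ^ 2 * u ^ 2) / (τ ^ 2 + (2 * x₀ * u - τ ^ 2 * x₀) ^ 2))
          = (1 / τ ^ 2) * (Real.log (1 + c ^ 2) / 2 - Real.log (1 + bl ^ 2) / 2) := by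
        have hR : (τ ^ 2 + 4 * x₀ ^ 2 * u ^ 2) / (τ ^ 2 + (2 * x₀ * u - τ ^ 2 * x₀) ^ 2)
            = (1 + c ^ 2) / (1 + bl ^ 2) := by
          rw [hc, hbl]
          rw [div_eq_div_iff (by positivity) (by positivity)]
          field_simp [hτne]
          ring
        rw [hR, Real.log_div (by positivity) (by positivity)]
        ring
      rw [e1, hF u, ← hbl, ← hc, ← hIlow]
      exact mul_le_mul_of_nonneg_left hmono1 (by positivity)
    · have e2 : (1 / τ ^ 2) * Real.log (2 * u / (2 * u - τ ^ 2))
          = (1 / τ ^ 2) * Real.log (c / bl) := by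
        have hcb : c / bl = 2 * u / (2 * u - τ ^ 2) := by
          rw [div_eq_div_iff hblpos.ne' h2u.ne', hc, hbl]
          field_simp [hτne]
        rw [hcb]
      rw [e2, hF u, ← hbl, ← hc, ← hIup]
      exact mul_le_mul_of_nonneg_left hmono2 (by positivity)
  refine ⟨main, ?_⟩
  -- squeeze for the limit
  have hLtend : Tendsto (fun u : ℝ => (1 / (2 * τ ^ 2)) *
      Real.log ((τ ^ 2 + 4 * x₀ ^ 2 * u ^ 2) / (τ ^ 2 + (2 * x₀ * u - τ ^ 2 * x₀) ^ 2)))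
      atTop (nhds 0) := by
    have hrat : Tendsto (fun u : ℝ =>
        (τ ^ 2 + 4 * x₀ ^ 2 * u ^ 2) / (τ ^ 2 + (2 * x₀ * u - τ ^ 2 * x₀) ^ 2)) atTop (nhds 1) := by
      have h1 : Tendsto (fun u : ℝ => τ ^ 2 / u ^ 2) atTop (nhds 0) :=
        tendsto_const_nhds.div_atTop (tendsto_pow_atTop (by norm_num))
      have h2 : Tendsto (fun u : ℝ => τ ^ 2 * x₀ / u) atTop (nhds 0) :=
        tendsto_const_nhds.div_atTop tendsto_id
      have h2' : Tendsto (fun u : ℝ => (2 * x₀ - τ ^ 2 * x₀ / u) ^ 2) atTop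
          (nhds ((2 * x₀ - 0) ^ 2)) :=
        (tendsto_const_nhds.sub h2).pow 2
      have hd0 : ((0:ℝ) + (2 * x₀ - 0) ^ 2) ≠ 0 := by
        rw [show (0:ℝ) + (2 * x₀ - 0) ^ 2 = 4 * x₀ ^ 2 from by ring]
        positivity
      have h3 : Tendsto (fun u : ℝ =>
          (τ ^ 2 / u ^ 2 + 4 * x₀ ^ 2) / (τ ^ 2 / u ^ 2 + (2 * x₀ - τ ^ 2 * x₀ / u) ^ 2))
          atTop (nhds ((0 + 4 * x₀ ^ 2) / (0 + (2 * x₀ - 0) ^ 2))) :=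
        Tendsto.div (h1.add tendsto_const_nhds) (h1.add h2') hd0
      have hval : ((0:ℝ) + 4 * x₀ ^ 2) / (0 + (2 * x₀ - 0) ^ 2) = 1 := by
        rw [div_eq_one_iff_eq hd0]
        ring
      rw [hval] at h3
      apply h3.congr'
      filter_upwards [eventually_gt_atTop (0:ℝ)] with u hu
      have hu2 : (0:ℝ) < u ^ 2 := by positivity
      have hd1 : 0 < τ ^ 2 / u ^ 2 + (2 * x₀ - τ ^ 2 * x₀ / u) ^ 2 :=
        add_pos_of_pos_of_nonneg (div_pos hτ2 hu2) (sq_nonneg _)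
      rw [div_eq_div_iff hd1.ne' (by positivity : (0:ℝ) < τ ^ 2 + (2 * x₀ * u - τ ^ 2 * x₀) ^ 2).ne']
      field_simp [hu.ne']
      try ring
    have hlog : Tendsto (fun u : ℝ =>
        Real.log ((τ ^ 2 + 4 * x₀ ^ 2 * u ^ 2) / (τ ^ 2 + (2 * x₀ * u - τ ^ 2 * x₀) ^ 2)))
        atTop (nhds 0) := by
      have := (Real.continuousAt_log one_ne_zero).tendsto.comp hrat
      simpa [Function.comp_def] using this
    have h4 := hlog.const_mul (1 / (2 * τ ^ 2))
    rw [mul_zero] at h4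
    exact h4
  have hUtend : Tendsto (fun u : ℝ => (1 / τ ^ 2) * Real.log (2 * u / (2 * u - τ ^ 2)))
      atTop (nhds 0) := by
    have hrat : Tendsto (fun u : ℝ => 2 * u / (2 * u - τ ^ 2)) atTop (nhds 1) := by
      have h1 : Tendsto (fun u : ℝ => τ ^ 2 / u) atTop (nhds 0) :=
        tendsto_const_nhds.div_atTop tendsto_id
      have h3 : Tendsto (fun u : ℝ => 2 / (2 - τ ^ 2 / u)) atTop (nhds (2 / (2 - 0))) :=
        Tendsto.div tendsto_const_nhds (tendsto_const_nhds.sub h1) (by norm_num)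
      rw [show (2:ℝ) / (2 - 0) = 1 from by norm_num] at h3
      apply h3.congr'
      filter_upwards [eventually_gt_atTop (max (τ ^ 2) 0)] with u hu
      have hu0 : 0 < u := lt_of_le_of_lt (le_max_right _ _) hu
      have huτ : τ ^ 2 < u := lt_of_le_of_lt (le_max_left _ _) hu
      have hd : 2 - τ ^ 2 / u = (2 * u - τ ^ 2) / u := by
        field_simp
      rw [hd, div_div_eq_mul_div]
    have hlog : Tendsto (fun u : ℝ => Real.log (2 * u / (2 * u - τ ^ 2))) atTop (nhds 0) := by
      have := (Real.continuousAt_log one_ne_zero).tendsto.comp hrat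
      simpa [Function.comp_def] using this
    have h4 := hlog.const_mul (1 / τ ^ 2)
    rw [mul_zero] at h4
    exact h4
  apply tendsto_of_tendsto_of_tendsto_of_le_of_le' hLtend hUtend
  · filter_upwards [eventually_gt_atTop (τ ^ 2 / 2)] with u hu
    exact (main u hu).1
  · filter_upwards [eventually_gt_atTop (τ ^ 2 / 2)] with u hu
    exact (main u hu).2
end

section
/- Let t₁ > 1/2 and a, x₀ > 0 satisfy 2a·x₀² > (e^{1/t₁} − 1) / (4t₁² − (2t₁ − 1)²·e^{1/t₁}), where the denominator is positive. Then (1/(2·2a))·log((1 + 4t₁²·(2a)·x₀²)/(1 + (2t₁ − 1)²·(2a)·x₀²)) > 1/(2·t₁·2a). -/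
theorem stmt_14 (t₁ a x₀ : ℝ) (ht₁ : 1 / 2 < t₁) (ha : 0 < a) (hx₀ : 0 < x₀)
    (hden : 0 < 4 * t₁ ^ 2 - (2 * t₁ - 1) ^ 2 * Real.exp (1 / t₁))
    (hcond : 2 * a * x₀ ^ 2 >
      (Real.exp (1 / t₁) - 1) / (4 * t₁ ^ 2 - (2 * t₁ - 1) ^ 2 * Real.exp (1 / t₁))) :
    (1 / (2 * (2 * a))) *
        Real.log ((1 + 4 * t₁ ^ 2 * (2 * a) * x₀ ^ 2) /
          (1 + (2 * t₁ - 1) ^ 2 * (2 * a) * x₀ ^ 2))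
      > 1 / (2 * t₁ * (2 * a)) := by
  have ht0 : 0 < t₁ := by linarith
  have hD : 0 < 1 + (2 * t₁ - 1) ^ 2 * (2 * a) * x₀ ^ 2 := by positivity
  have hN : 0 < 1 + 4 * t₁ ^ 2 * (2 * a) * x₀ ^ 2 := by positivity
  have h := (div_lt_iff₀ hden).mp hcond
  have key : Real.exp (1 / t₁) * (1 + (2 * t₁ - 1) ^ 2 * (2 * a) * x₀ ^ 2) <
      1 + 4 * t₁ ^ 2 * (2 * a) * x₀ ^ 2 := by nlinarith
  have hX : Real.exp (1 / t₁) <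
      (1 + 4 * t₁ ^ 2 * (2 * a) * x₀ ^ 2) /
        (1 + (2 * t₁ - 1) ^ 2 * (2 * a) * x₀ ^ 2) := (lt_div_iff₀ hD).mpr key
  have hlog : 1 / t₁ < Real.log ((1 + 4 * t₁ ^ 2 * (2 * a) * x₀ ^ 2) /
      (1 + (2 * t₁ - 1) ^ 2 * (2 * a) * x₀ ^ 2)) :=
    (Real.lt_log_iff_exp_lt (by positivity)).mpr hX
  have heq : 1 / (2 * t₁ * (2 * a)) = 1 / (2 * (2 * a)) * (1 / t₁) := by
    field_simp
  rw [gt_iff_lt, heq]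
  exact mul_lt_mul_of_pos_left hlog (by positivity)
end

section
/- Fix x₀ ≥ 1 and θ > 0. Let f̂(θ) := exp(x₀·(1 − √(2θ + 1))) be the Laplace transform of the first passage time ξ = inf{ s > 0 : W_s + s ≥ x₀ } of a standard Brownian motion with unit drift to level x₀, and let m̂(θ) := f̂(θ)/(θ·(1 − f̂(θ))), ℓ̂(θ) := 1/(x₀·θ²). Then 0 < f̂(θ) < 1 and m̂(θ) ≤ ℓ̂(θ) for all θ > 0. -/
theorem stmt_19 (x₀ : ℝ) (hx₀ : 1 ≤ x₀)
    (fhat mhat lhat : ℝ → ℝ)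
    (hf : ∀ θ, fhat θ = Real.exp (x₀ * (1 - Real.sqrt (2 * θ + 1))))
    (hm : ∀ θ, mhat θ = fhat θ / (θ * (1 - fhat θ)))
    (hl : ∀ θ, lhat θ = 1 / (x₀ * θ ^ 2)) :
    ∀ θ, 0 < θ → (0 < fhat θ ∧ fhat θ < 1 ∧ mhat θ ≤ lhat θ) := by
  intro θ hθ
  have hx : (0:ℝ) < x₀ := lt_of_lt_of_le one_pos hx₀
  set s := Real.sqrt (2 * θ + 1) with hsdef
  have hssq : s ^ 2 = 2 * θ + 1 := Real.sq_sqrt (by linarith)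
  have hs : 1 < s := by
    nlinarith [Real.sqrt_nonneg (2 * θ + 1)]
  have hfθ : fhat θ = Real.exp (x₀ * (1 - s)) := hf θ
  have hfpos : 0 < fhat θ := by rw [hfθ]; exact Real.exp_pos _
  have hflt : fhat θ < 1 := by
    rw [hfθ]
    exact Real.exp_lt_one_iff.mpr (mul_neg_of_pos_of_neg hx (by linarith))
  refine ⟨hfpos, hflt, ?_⟩
  set u := x₀ * (s - 1) with hudef
  have hu : 0 ≤ u := mul_nonneg hx.le (by linarith)
  have hexp : 1 + u + u ^ 2 / 2 ≤ Real.exp u := Real.quadratic_le_exp_of_nonneg hu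
  -- key : x₀ * θ * fhat θ ≤ 1 - fhat θ
  have hfe : fhat θ * Real.exp u = 1 := by
    rw [hfθ, ← Real.exp_add]
    have : x₀ * (1 - s) + u = 0 := by rw [hudef]; ring
    rw [this, Real.exp_zero]
  have hkey : x₀ * θ * fhat θ ≤ 1 - fhat θ := by
    have h1 : x₀ * θ ≤ Real.exp u - 1 := by
      have h2 : u + u ^ 2 / 2 ≥ u * (s + 1) / 2 := by nlinarith
      have h3 : x₀ * θ = u * (s + 1) / 2 := by rw [hudef]; nlinarith
      linarith
    nlinarith [Real.exp_pos u]
  rw [hm, hl]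
  rw [div_le_div_iff₀ (mul_pos hθ (by linarith)) (by positivity)]
  nlinarith
end
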